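/- Fix δ ∈ (0,1) and c₀ > 0, and for each integer k ≥ 2 let R = c₀·ln(k/δ)·√k, D = ⌊k/R⌋, and let Ω_R be the Robust Soliton distribution. Then there exists an integer K₀ such that for all k ≥ K₀, the probability that a node stores no information satisfies Ω′(0) = ∑_{d=1}^{k} (1 − d/k)^k·Ω_R(d) > 1/(2e²). -/

import Mathlib

/-- The Ideal Soliton distribution on `{1, …, k}`:
`Ω_I(1) = 1/k` and `Ω_I(d) = 1/(d(d−1))` for `d = 2, …, k`. -/
noncomputable def idealSoliton (k d : ℕ) : ℝ :=
  if d = 1 then 1 / (k : ℝ) else 1 / ((d : ℝ) * ((d : ℝ) - 1))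

/-- The function `τ` from the Robust Soliton construction: with `D = ⌊k/R⌋`,
`τ(d) = R/(dk)` for `1 ≤ d ≤ D−1`, `τ(D) = R·ln(R/δ)/k`, and `τ(d) = 0` for `D < d ≤ k`. -/
noncomputable def tauRS (k : ℕ) (R δ : ℝ) (d : ℕ) : ℝ :=
  if d < ⌊(k : ℝ) / R⌋₊ then R / ((d : ℝ) * (k : ℝ))
  else if d = ⌊(k : ℝ) / R⌋₊ then R * Real.log (R / δ) / (k : ℝ)
  else 0

/-- The normalizing constant `β = ∑_{i=1}^{k} (τ(i) + Ω_I(i))`. -/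
noncomputable def betaRS (k : ℕ) (R δ : ℝ) : ℝ :=
  ∑ i ∈ Finset.Icc 1 k, (tauRS k R δ i + idealSoliton k i)

/-- The Robust Soliton distribution `Ω_R(d) = (τ(d) + Ω_I(d))/β`. -/
noncomputable def robustSoliton (k : ℕ) (R δ : ℝ) (d : ℕ) : ℝ :=
  (tauRS k R δ d + idealSoliton k d) / betaRS k R δ

/-! Only the degrees `d = 2, 3` matter: dropping `τ` and all other degrees,
`Ω′(0) ≥ ((1 - 2/k)^k / 2 + (1 - 3/k)^k / 6) / β`, whose limit is `e⁻²/2 + e⁻³/6 > 1/(2e²)`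
provided `β → 1`. Since `Ω_I` sums to `1`, `β = 1 + ∑ τ`, and `∑ τ ≤ (R/k)(H_k + ln(k/δ))`,
which is `O(ln² k / √k)` for `R = c₀ ln(k/δ) √k`. -/

open Filter Finset Real Topology

lemma sum_Icc_two_one_div_mul_sub_one {k : ℕ} (hk : 1 ≤ k) :
    ∑ i ∈ Icc 2 k, 1 / ((i : ℝ) * ((i : ℝ) - 1)) = 1 - 1 / (k : ℝ) := by
  induction k, hk using Nat.le_induction with
  | base => simp
  | succ n hn ih =>
    rw [sum_Icc_succ_top (by omega), ih]
    push_cast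
    rw [add_sub_cancel_right]
    field_simp
    ring

lemma sum_idealSoliton {k : ℕ} (hk : 1 ≤ k) : ∑ i ∈ Icc 1 k, idealSoliton k i = 1 := by
  have hrest : ∑ i ∈ Icc 2 k, idealSoliton k i = ∑ i ∈ Icc 2 k, 1 / ((i : ℝ) * ((i : ℝ) - 1)) :=
    sum_congr rfl fun i hi => if_neg (by have := (mem_Icc.mp hi).1; omega)
  rw [← insert_Icc_add_one_left_eq_Icc hk, sum_insert (by simp), show 1 + 1 = 2 from rfl, hrest,
    sum_Icc_two_one_div_mul_sub_one hk]
  simp [idealSoliton]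

lemma idealSoliton_nonneg (k d : ℕ) : 0 ≤ idealSoliton k d := by
  unfold idealSoliton
  split_ifs
  · positivity
  · rcases d with _ | d
    · simp
    · push_cast
      rw [add_sub_cancel_right]
      positivity

section Tau

variable {k : ℕ} {R δ : ℝ}

lemma tauRS_nonneg (hδ : 0 < δ) (hδR : δ ≤ R) (d : ℕ) : 0 ≤ tauRS k R δ d := by
  have hlog : 0 ≤ log (R / δ) := log_nonneg ((one_le_div hδ).mpr hδR)
  have hR : 0 ≤ R := hδ.le.trans hδR
  unfold tauRS
  split_ifs <;> positivity

lemma tauRS_le (hR : 0 ≤ R) (d : ℕ) :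
    tauRS k R δ d ≤ R / (d * k) + if d = ⌊(k : ℝ) / R⌋₊ then R * log (R / δ) / k else 0 := by
  have h : 0 ≤ R / (d * k) := by positivity
  unfold tauRS
  split_ifs <;> first | omega | linarith

lemma sum_tauRS_le (hδ : 0 < δ) (hδR : δ ≤ R) (hRk : R ≤ k) :
    ∑ i ∈ Icc 1 k, tauRS k R δ i ≤ R / k * (1 + log k + log (k / δ)) := by
  have hR : 0 < R := hδ.trans_le hδR
  have hharmonic : ∑ i ∈ Icc 1 k, ((i : ℝ))⁻¹ ≤ 1 + log k := by
    simpa [harmonic_eq_sum_Icc] using harmonic_le_one_add_log k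
  have hlogR : 0 ≤ log (R / δ) := log_nonneg ((one_le_div hδ).mpr hδR)
  have hpeak : R * log (R / δ) / k ≤ R * log (k / δ) / k := by gcongr
  have hpeak' : 0 ≤ R * log (R / δ) / k := by positivity
  calc ∑ i ∈ Icc 1 k, tauRS k R δ i
      ≤ ∑ i ∈ Icc 1 k, (R / (i * k) +
          if i = ⌊(k : ℝ) / R⌋₊ then R * log (R / δ) / k else 0) :=
        sum_le_sum fun i _ => tauRS_le hR.le i
    _ = R / k * ∑ i ∈ Icc 1 k, ((i : ℝ))⁻¹ +
          if ⌊(k : ℝ) / R⌋₊ ∈ Icc 1 k then R * log (R / δ) / k else 0 := by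
        rw [sum_add_distrib, sum_ite_eq', mul_sum]
        congr 1
        refine sum_congr rfl fun i _ => ?_
        rw [mul_comm (i : ℝ), ← div_div, div_eq_mul_inv]
    _ ≤ R / k * (1 + log k) + R * log (k / δ) / k := by
        gcongr
        split_ifs
        exacts [hpeak, hpeak'.trans hpeak]
    _ = R / k * (1 + log k + log (k / δ)) := by ring

end Tau

section Beta

variable {k : ℕ} {R δ : ℝ}

lemma betaRS_eq_one_add_sum_tauRS (hk : 1 ≤ k) :
    betaRS k R δ = 1 + ∑ i ∈ Icc 1 k, tauRS k R δ i := by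
  rw [betaRS, sum_add_distrib, sum_idealSoliton hk, add_comm]

lemma one_le_betaRS (hk : 1 ≤ k) (hδ : 0 < δ) (hδR : δ ≤ R) : 1 ≤ betaRS k R δ := by
  rw [betaRS_eq_one_add_sum_tauRS hk, le_add_iff_nonneg_right]
  exact sum_nonneg fun i _ => tauRS_nonneg hδ hδR i

lemma tendsto_betaRS_one {R : ℕ → ℝ} (hδ : 0 < δ) (hδR : ∀ᶠ k in atTop, δ ≤ R k)
    (hRk : ∀ᶠ k in atTop, R k ≤ k)
    (hR : Tendsto (fun k : ℕ => R k / k * (1 + log k + log (k / δ))) atTop (𝓝 0)) :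
    Tendsto (fun k => betaRS k (R k) δ) atTop (𝓝 1) := by
  have hτ : Tendsto (fun k => ∑ i ∈ Icc 1 k, tauRS k (R k) δ i) atTop (𝓝 0) := by
    refine squeeze_zero' ?_ ?_ hR
    · filter_upwards [hδR] with k h
      exact sum_nonneg fun i _ => tauRS_nonneg hδ h i
    · filter_upwards [hδR, hRk] with k h1 h2
      exact sum_tauRS_le hδ h1 h2
  have h := (tendsto_const_nhds (x := (1 : ℝ))).add hτ
  rw [add_zero] at h
  refine h.congr' ?_
  filter_upwards [eventually_ge_atTop 1] with k hk
  exact (betaRS_eq_one_add_sum_tauRS hk).symm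

end Beta

lemma one_sub_div_pow_nonneg {k d : ℕ} (hd : d ≤ k) : 0 ≤ (1 - (d : ℝ) / k) ^ k :=
  pow_nonneg (sub_nonneg.mpr (div_le_one_of_le₀ (by exact_mod_cast hd) k.cast_nonneg)) k

lemma two_three_le_sum_pow_mul_idealSoliton {k : ℕ} (hk : 3 ≤ k) :
    (1 - 2 / (k : ℝ)) ^ k / 2 + (1 - 3 / (k : ℝ)) ^ k / 6 ≤
      ∑ d ∈ Icc 1 k, (1 - (d : ℝ) / k) ^ k * idealSoliton k d := by
  have hsub : ({2, 3} : Finset ℕ) ⊆ Icc 1 k := by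
    intro d hd
    simp only [mem_insert, mem_singleton] at hd
    rw [mem_Icc]
    omega
  calc (1 - 2 / (k : ℝ)) ^ k / 2 + (1 - 3 / (k : ℝ)) ^ k / 6
      = ∑ d ∈ ({2, 3} : Finset ℕ), (1 - (d : ℝ) / k) ^ k * idealSoliton k d := by
        norm_num [idealSoliton, div_eq_mul_inv]
    _ ≤ _ := sum_le_sum_of_subset_of_nonneg hsub fun d hd _ =>
        mul_nonneg (one_sub_div_pow_nonneg (mem_Icc.mp hd).2) (idealSoliton_nonneg k d)

lemma sum_pow_mul_idealSoliton_div_le {k : ℕ} {R δ : ℝ} (hk : 1 ≤ k) (hδ : 0 < δ)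
    (hδR : δ ≤ R) :
    (∑ d ∈ Icc 1 k, (1 - (d : ℝ) / k) ^ k * idealSoliton k d) / betaRS k R δ ≤
      ∑ d ∈ Icc 1 k, (1 - (d : ℝ) / k) ^ k * robustSoliton k R δ d := by
  have hβ : 0 < betaRS k R δ := one_pos.trans_le (one_le_betaRS hk hδ hδR)
  rw [sum_div]
  refine sum_le_sum fun d hd => ?_
  rw [robustSoliton, mul_div_assoc]
  have hpow := one_sub_div_pow_nonneg (mem_Icc.mp hd).2
  have hτ := tauRS_nonneg (k := k) hδ hδR d
  gcongr
  linarith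

lemma two_three_div_betaRS_le {k : ℕ} {R δ : ℝ} (hk : 3 ≤ k) (hδ : 0 < δ) (hδR : δ ≤ R) :
    ((1 - 2 / (k : ℝ)) ^ k / 2 + (1 - 3 / (k : ℝ)) ^ k / 6) / betaRS k R δ ≤
      ∑ d ∈ Icc 1 k, (1 - (d : ℝ) / k) ^ k * robustSoliton k R δ d :=
  (div_le_div_of_nonneg_right (two_three_le_sum_pow_mul_idealSoliton hk)
    (zero_le_one.trans (one_le_betaRS (by omega) hδ hδR))).trans
    (sum_pow_mul_idealSoliton_div_le (by omega) hδ hδR)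

lemma tendsto_quadratic_log_div_sqrt (p q r : ℝ) :
    Tendsto (fun x => (p * log x ^ 2 + q * log x + r) / √x) atTop (𝓝 0) := by
  have hpow (n : ℕ) : Tendsto (fun y => log y ^ n / y) atTop (𝓝 0) := by
    simpa using tendsto_pow_log_div_mul_add_atTop 1 0 n one_ne_zero
  have h := (((hpow 2).const_mul (4 * p)).add ((hpow 1).const_mul (2 * q))).add
    ((hpow 0).const_mul r)
  simp only [mul_zero, add_zero] at h
  refine (h.comp tendsto_sqrt_atTop).congr' ?_
  filter_upwards [eventually_gt_atTop 0] with x hx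
  simp only [Function.comp_apply, log_sqrt hx.le]
  ring

section RobustParameter

variable {c₀ δ : ℝ}

lemma tendsto_mul_log_div_mul_sqrt_atTop (hc₀ : 0 < c₀) (hδ : 0 < δ) :
    Tendsto (fun x => c₀ * log (x / δ) * √x) atTop atTop :=
  ((tendsto_log_atTop.comp (tendsto_id.atTop_div_const hδ)).const_mul_atTop hc₀).atTop_mul_atTop₀
    tendsto_sqrt_atTop

lemma tendsto_mul_log_div_mul_sqrt_div_self (hδ : δ ≠ 0) :
    Tendsto (fun x => c₀ * log (x / δ) * √x / x) atTop (𝓝 0) := by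
  refine (tendsto_quadratic_log_div_sqrt 0 c₀ (-c₀ * log δ)).congr' ?_
  filter_upwards [eventually_gt_atTop 0] with x hx
  rw [mul_div_assoc, sqrt_div_self', log_div hx.ne' hδ]
  ring

lemma tendsto_mul_log_div_mul_sqrt_div_self_mul (hδ : δ ≠ 0) :
    Tendsto (fun x => c₀ * log (x / δ) * √x / x * (1 + log x + log (x / δ))) atTop (𝓝 0) := by
  refine (tendsto_quadratic_log_div_sqrt (2 * c₀) (c₀ * (1 - 3 * log δ))
    (c₀ * (log δ ^ 2 - log δ))).congr' ?_
  filter_upwards [eventually_gt_atTop 0] with x hx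
  rw [mul_div_assoc, sqrt_div_self', log_div hx.ne' hδ]
  ring

lemma eventually_mul_log_div_mul_sqrt_le_self (hδ : δ ≠ 0) :
    ∀ᶠ x in atTop, c₀ * log (x / δ) * √x ≤ x := by
  filter_upwards [(tendsto_mul_log_div_mul_sqrt_div_self hδ).eventually
    (eventually_le_nhds one_pos), eventually_gt_atTop 0] with x h hx
  exact (div_le_one hx).mp h

end RobustParameter

lemma tendsto_one_sub_div_pow_exp (t : ℝ) :
    Tendsto (fun n : ℕ => (1 - t / n) ^ n) atTop (𝓝 (exp (-t))) := by
  simpa [sub_eq_add_neg, neg_div] using tendsto_one_add_div_pow_exp (-t)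

lemma one_div_two_mul_exp_two_lt : 1 / (2 * exp 2) < exp (-2) / 2 + exp (-3) / 6 := by
  have h : 1 / (2 * exp 2) = exp (-2) / 2 := by rw [exp_neg]; ring
  rw [h]
  exact lt_add_of_pos_right _ (by positivity)

/-- Fix `δ ∈ (0,1)` and `c₀ > 0`, and for each integer `k ≥ 2` let
`R = c₀·ln(k/δ)·√k`, `D = ⌊k/R⌋`, and let `Ω_R` be the Robust Soliton distribution.
Then there exists an integer `K₀` such that for all `k ≥ K₀`, the probability that a node
stores no information satisfies `Ω′(0) = ∑_{d=1}^{k} (1 − d/k)^k·Ω_R(d) > 1/(2e²)`. -/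
theorem robustSoliton_store_nothing_gt (δ c₀ : ℝ) (hδ : δ ∈ Set.Ioo (0 : ℝ) 1)
    (hc₀ : 0 < c₀) :
    ∃ K₀ : ℕ, 2 ≤ K₀ ∧ ∀ k : ℕ, K₀ ≤ k →
      ∑ d ∈ Finset.Icc 1 k, (1 - (d : ℝ) / (k : ℝ)) ^ k *
          robustSoliton k (c₀ * Real.log ((k : ℝ) / δ) * Real.sqrt (k : ℝ)) δ d
        > 1 / (2 * Real.exp 2) := by
  have hδ0 : 0 < δ := hδ.1
  have hδR : ∀ᶠ k : ℕ in atTop, δ ≤ c₀ * log (k / δ) * √k :=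
    ((tendsto_mul_log_div_mul_sqrt_atTop hc₀ hδ0).comp
      tendsto_natCast_atTop_atTop).eventually_ge_atTop δ
  have hβ : Tendsto (fun k : ℕ => betaRS k (c₀ * log (k / δ) * √k) δ) atTop (𝓝 1) :=
    tendsto_betaRS_one hδ0 hδR
      (tendsto_natCast_atTop_atTop.eventually (eventually_mul_log_div_mul_sqrt_le_self hδ0.ne'))
      ((tendsto_mul_log_div_mul_sqrt_div_self_mul hδ0.ne').comp tendsto_natCast_atTop_atTop)
  have hlim := (((tendsto_one_sub_div_pow_exp 2).div_const 2).add
    ((tendsto_one_sub_div_pow_exp 3).div_const 6)).div hβ one_ne_zero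
  rw [div_one] at hlim
  have hev : ∀ᶠ k : ℕ in atTop, 1 / (2 * exp 2) <
      ∑ d ∈ Icc 1 k, (1 - (d : ℝ) / k) ^ k * robustSoliton k (c₀ * log (k / δ) * √k) δ d := by
    filter_upwards [hlim.eventually (eventually_gt_nhds one_div_two_mul_exp_two_lt), hδR,
      eventually_ge_atTop 3] with k hlt hδRk hk
    exact hlt.trans_le (two_three_div_betaRS_le hk hδ0 hδRk)
  obtain ⟨K, hK⟩ := eventually_atTop.mp hev
  exact ⟨max K 2, le_max_right K 2, fun k hk => hK k (le_of_max_le_left hk)⟩
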